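/- arXiv:2009.13865 — 6 statements merged into one kernel-verified Lean document; each statement's English description precedes it below -/
import Mathlib

section
/- Let X and W be finite types, let p : X → ℝ be nonnegative with ∑_x p(x) = 1, and let ψ : X × W → ℂ satisfy ∑_{x,w} |ψ(x,w)|² ≤ 1. Then ∑_x p(x) · √(∑_w |ψ(x,w)|²) ≤ √(max_x p(x)). -/
/-!
Write `a x = ∑ w, ‖ψ (x, w)‖ ^ 2`, so that `∑ x, a x ≤ 1`. Jensen's inequality for the concave
square root (here in its Cauchy–Schwarz form) bounds `∑ x, p x * √(a x)` by `√(∑ x, p x * a x)`,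
and this average of `a` against `p` is at most `max p * ∑ x, a x ≤ max p`.
-/

open Finset Real

theorem Finset.sum_mul_sqrt_le_sqrt_sum_mul {ι : Type*} (s : Finset ι) {p a : ι → ℝ}
    (hp : ∀ i, 0 ≤ p i) (ha : ∀ i, 0 ≤ a i) (hs : ∑ i ∈ s, p i = 1) :
    ∑ i ∈ s, p i * √(a i) ≤ √(∑ i ∈ s, p i * a i) :=
  calc ∑ i ∈ s, p i * √(a i) = ∑ i ∈ s, √(p i) * √(p i * a i) :=
        sum_congr rfl fun i _ => by rw [sqrt_mul (hp i), ← mul_assoc, mul_self_sqrt (hp i)]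
    _ ≤ √(∑ i ∈ s, p i) * √(∑ i ∈ s, p i * a i) :=
        sum_sqrt_mul_sqrt_le s hp fun i => mul_nonneg (hp i) (ha i)
    _ = √(∑ i ∈ s, p i * a i) := by rw [hs, sqrt_one, one_mul]

theorem Fintype.sum_mul_le_iSup_mul_sum {ι : Type*} [Fintype ι] (p : ι → ℝ) {a : ι → ℝ}
    (ha : ∀ i, 0 ≤ a i) : ∑ i, p i * a i ≤ (⨆ i, p i) * ∑ i, a i := by
  rw [mul_sum]
  exact sum_le_sum fun i _ =>
    mul_le_mul_of_nonneg_right (le_ciSup (Finite.bddAbove_range p) i) (ha i)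

/-- The Jensen-inequality bound from the proof of Lemma 6 of the paper: for any
subnormalized state `ψ` on registers `X × W` independent of a sample `x` drawn
from the distribution `p`, the expected Euclidean norm of the projection of `ψ`
onto `|x⟩` is at most the square root of the optimal guessing probability of `p`. -/
theorem guessing_norm_bound (X W : Type*) [Fintype X] [Fintype W]
    (p : X → ℝ) (hp : ∀ x, 0 ≤ p x) (hsum : ∑ x, p x = 1)
    (ψ : X × W → ℂ) (hψ : ∑ q : X × W, ‖ψ q‖ ^ 2 ≤ 1) :
    ∑ x, p x * Real.sqrt (∑ w, ‖ψ (x, w)‖ ^ 2) ≤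
      Real.sqrt (⨆ x, p x) := by
  set a : X → ℝ := fun x => ∑ w, ‖ψ (x, w)‖ ^ 2
  have ha : ∀ x, 0 ≤ a x := fun x => sum_nonneg fun w _ => sq_nonneg _
  have ha_sum : ∑ x, a x ≤ 1 := by rwa [Fintype.sum_prod_type] at hψ
  have hp_avg : ∑ x, p x * a x ≤ ⨆ x, p x :=
    calc ∑ x, p x * a x ≤ (⨆ x, p x) * ∑ x, a x := Fintype.sum_mul_le_iSup_mul_sum p ha
      _ ≤ ⨆ x, p x := mul_le_of_le_one_right (iSup_nonneg hp) ha_sum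
  calc ∑ x, p x * √(a x) ≤ √(∑ x, p x * a x) := univ.sum_mul_sqrt_le_sqrt_sum_mul hp ha hsum
    _ ≤ √(⨆ x, p x) := sqrt_le_sqrt hp_avg
end

section
/- Let λ, m, q ∈ ℕ with q ≥ 1, let X = (Fin λ → Bool), Y = (Fin m → Bool) with bitwise XOR, and let W be a finite type. Work on the Hilbert space ℋ of complex functions on Y × X × Y × W (an output register, a query-input register, a query-output register, and an auxiliary register). For H : X → Y, let O^H be the oracle unitary acting on the query-input and query-output registers and as the identity on the other two. Let U be any unitary on ℋ, let Π⁰ be an orthogonal projection on ℋ, and set Π¹ = 1 − Π⁰. Let p : X → ℝ be nonnegative with ∑_x p(x) = 1, and for each x ∈ X let ψ_x be a unit vector on the last three registers. Then ½·E_H ∑_x p(x) ‖Π⁰ (U O^H)^q (|H(x)⟩ ⊗ ψ_x)‖² + ½·E_H ∑_x p(x) 2^{−m} ∑_{z ∈ Y} ‖Π¹ (U O^H)^q (|z⟩ ⊗ ψ_x)‖² ≤ ½ + (3q + 2)·q·M, where E_H denotes the uniform average over all functions H : X → Y, P_x is the orthogonal projection onto basis states whose query-input register equals x, and M = ½·E_H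 ∑_x p(x) · 2^{−m} ∑_z (1/q) ∑_{k=0}^{q−1} ‖P_x (U O^{H_{x,z}})^k (|z⟩ ⊗ ψ_x)‖ + ½·E_H ∑_x p(x) · 2^{−m} ∑_z (1/q) ∑_{k=0}^{q−1} ‖P_x (U O^H)^k (|z⟩ ⊗ ψ_x)‖. -/
/-!
Reprogramming a uniform oracle `H` at `x` to a uniform value `z` leaves it uniform, so the
first term is the probability that `Π⁰` accepts the final state of the run with oracle
`H_{x,z}` on `|z⟩ ⊗ ψ_x`, while the second term concerns the run with oracle `H` on the same
input. For an orthogonal projection, `‖Π⁰ u‖² + ‖Π¹ v‖² ≤ 1 + 2 ‖u - v‖` for unit vectors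
`u, v`, and the hybrid argument bounds the distance of the two final states by
`∑ₖ ‖(O^{H_{x,z}} - O^H) (U O^H)ᵏ (|z⟩ ⊗ ψ_x)‖ ≤ 2 ∑ₖ ‖P_x (U O^H)ᵏ (|z⟩ ⊗ ψ_x)‖`,
because the two oracles differ only on queries at `x`. Averaging gives the bound with
`4q` in place of `(3q + 2) q`.
-/

open Matrix Finset

/-- Squared Euclidean norm of a complex vector. -/
noncomputable def nsq {ι : Type*} [Fintype ι] (v : ι → ℂ) : ℝ :=
  ∑ i, ‖v i‖ ^ 2

/-- Euclidean norm of a complex vector. -/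
noncomputable def nrm {ι : Type*} [Fintype ι] (v : ι → ℂ) : ℝ :=
  Real.sqrt (nsq v)

/-- Bitwise XOR of Boolean strings. -/
def xorV {m : ℕ} (a b : Fin m → Bool) : Fin m → Bool := fun i => xor (a i) (b i)

/-- The oracle unitary `O^H` of `H : X → Y` on the Hilbert space of complex
functions on `Y × X × Y × W` (output register, query-input register, query-output
register, auxiliary register), acting as
`|y₀, x, y, w⟩ ↦ |y₀, x, y ⊕ H(x), w⟩`. -/
def o2hOracle {l m : ℕ} {W : Type*} [DecidableEq W] (H : (Fin l → Bool) → (Fin m → Bool)) :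
    Matrix ((Fin m → Bool) × (Fin l → Bool) × (Fin m → Bool) × W)
      ((Fin m → Bool) × (Fin l → Bool) × (Fin m → Bool) × W) ℂ :=
  Matrix.of fun p q =>
    if p.1 = q.1 ∧ p.2.1 = q.2.1 ∧ p.2.2.1 = xorV q.2.2.1 (H q.2.1) ∧ p.2.2.2 = q.2.2.2
    then 1 else 0

/-- The orthogonal projection `P_x` onto basis states whose query-input register
equals `x`. -/
def pquery {l m : ℕ} {W : Type*} [DecidableEq W] (x : Fin l → Bool) :
    Matrix ((Fin m → Bool) × (Fin l → Bool) × (Fin m → Bool) × W)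
      ((Fin m → Bool) × (Fin l → Bool) × (Fin m → Bool) × W) ℂ :=
  Matrix.diagonal fun p => if p.2.1 = x then 1 else 0

/-- The state `|z⟩ ⊗ φ`, with `z` in the output register and `φ` on the last
three registers. -/
def tensVec {l m : ℕ} {W : Type*} (z : Fin m → Bool)
    (φ : (Fin l → Bool) × (Fin m → Bool) × W → ℂ) :
    (Fin m → Bool) × (Fin l → Bool) × (Fin m → Bool) × W → ℂ :=
  fun p => (if p.1 = z then 1 else 0) * φ p.2

section Norms

variable {ι : Type*} [Fintype ι]

lemma nrm_eq_norm (v : ι → ℂ) : nrm v = ‖WithLp.toLp 2 v‖ := by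
  simp [nrm, nsq, EuclideanSpace.norm_eq]

lemma nsq_nonneg (v : ι → ℂ) : 0 ≤ nsq v := sum_nonneg fun _ _ => by positivity

lemma nrm_nonneg (v : ι → ℂ) : 0 ≤ nrm v := Real.sqrt_nonneg _

lemma nrm_sq (v : ι → ℂ) : nrm v ^ 2 = nsq v := Real.sq_sqrt (nsq_nonneg v)

lemma nrm_add_le (u v : ι → ℂ) : nrm (u + v) ≤ nrm u + nrm v := by
  simpa only [nrm_eq_norm, WithLp.toLp_add] using norm_add_le _ _

lemma nrm_sub_le (u v : ι → ℂ) : nrm (u - v) ≤ nrm u + nrm v := by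
  simpa only [nrm_eq_norm, WithLp.toLp_sub] using norm_sub_le _ _

lemma nrm_sub_nrm_le (u v : ι → ℂ) : nrm u - nrm v ≤ nrm (u - v) := by
  simpa only [nrm_eq_norm, WithLp.toLp_sub] using norm_sub_norm_le _ _

lemma nsq_eq_re_dotProduct (v : ι → ℂ) : nsq v = (star v ⬝ᵥ v).re := by
  simp only [nsq, dotProduct, Complex.re_sum, Pi.star_apply, Complex.star_def,
    Complex.conj_mul', ← Complex.ofReal_pow, Complex.ofReal_re]

lemma nsq_mulVec (M : Matrix ι ι ℂ) (v : ι → ℂ) :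
    nsq (M *ᵥ v) = (star v ⬝ᵥ (Mᴴ * M) *ᵥ v).re := by
  rw [nsq_eq_re_dotProduct, star_mulVec, dotProduct_mulVec, vecMul_vecMul,
    ← dotProduct_mulVec]

variable [DecidableEq ι]

lemma nrm_mulVec_of_conjTranspose_mul_self {M : Matrix ι ι ℂ} (hM : Mᴴ * M = 1)
    (v : ι → ℂ) : nrm (M *ᵥ v) = nrm v := by
  rw [nrm, nrm, nsq_mulVec, hM, one_mulVec, nsq_eq_re_dotProduct]

lemma nsq_mulVec_add_nsq_one_sub_mulVec {P : Matrix ι ι ℂ} (hidem : P * P = P)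
    (hherm : Pᴴ = P) (v : ι → ℂ) : nsq (P *ᵥ v) + nsq ((1 - P) *ᵥ v) = nsq v := by
  have hP : Pᴴ * P = P := by rw [hherm, hidem]
  have hQ : (1 - P)ᴴ * (1 - P) = 1 - P := by
    rw [conjTranspose_sub, conjTranspose_one, hherm, Matrix.sub_mul, Matrix.mul_sub,
      Matrix.mul_sub, hidem, Matrix.one_mul, Matrix.mul_one, Matrix.one_mul, sub_self, sub_zero]
  rw [nsq_mulVec, nsq_mulVec, hP, hQ, ← Complex.add_re, ← dotProduct_add, ← add_mulVec,
    add_sub_cancel, one_mulVec, nsq_eq_re_dotProduct]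

lemma nrm_mulVec_le_of_isProjection {P : Matrix ι ι ℂ} (hidem : P * P = P)
    (hherm : Pᴴ = P) (v : ι → ℂ) : nrm (P *ᵥ v) ≤ nrm v := by
  refine Real.sqrt_le_sqrt ?_
  rw [← nsq_mulVec_add_nsq_one_sub_mulVec hidem hherm v]
  exact le_add_of_nonneg_right (nsq_nonneg _)

/-- With `a = ‖P u‖` and `c = ‖P v‖`, the left side is `1 + (a + c) (a - c)`, and
`a - c ≤ ‖u - v‖`. -/
lemma nsq_mulVec_add_nsq_one_sub_mulVec_le {P : Matrix ι ι ℂ} (hidem : P * P = P)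
    (hherm : Pᴴ = P) {u v : ι → ℂ} (hu : nsq u = 1) (hv : nsq v = 1) :
    nsq (P *ᵥ u) + nsq ((1 - P) *ᵥ v) ≤ 1 + 2 * nrm (u - v) := by
  have hcompl := nsq_mulVec_add_nsq_one_sub_mulVec hidem hherm v
  have hnrm : ∀ w : ι → ℂ, nsq w = 1 → nrm w = 1 := fun w hw => by
    rw [nrm, hw, Real.sqrt_one]
  have ha : nrm (P *ᵥ u) ≤ 1 := hnrm u hu ▸ nrm_mulVec_le_of_isProjection hidem hherm u
  have hc : nrm (P *ᵥ v) ≤ 1 := hnrm v hv ▸ nrm_mulVec_le_of_isProjection hidem hherm v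
  have hac : nrm (P *ᵥ u) - nrm (P *ᵥ v) ≤ nrm (u - v) :=
    (nrm_sub_nrm_le _ _).trans (mulVec_sub P u v ▸ nrm_mulVec_le_of_isProjection hidem hherm _)
  rw [← nrm_sq, ← nrm_sq] at hcompl ⊢
  nlinarith [nrm_nonneg (P *ᵥ u), nrm_nonneg (P *ᵥ v), nrm_nonneg (u - v)]

lemma nrm_pow_mulVec_of_isometry {A : Matrix ι ι ℂ} (hA : ∀ w, nrm (A *ᵥ w) = nrm w)
    (v : ι → ℂ) (n : ℕ) : nrm ((A ^ n) *ᵥ v) = nrm v := by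
  induction n with
  | zero => rw [pow_zero, one_mulVec]
  | succ n ih => rw [pow_succ', ← mulVec_mulVec, hA, ih]

/-- The hybrid argument: `A ^ n` and `B ^ n` are compared by swapping one factor at a time. -/
lemma nrm_pow_mulVec_sub_pow_mulVec_le {A : Matrix ι ι ℂ} (hA : ∀ w, nrm (A *ᵥ w) = nrm w)
    (B : Matrix ι ι ℂ) (v : ι → ℂ) (n : ℕ) :
    nrm ((A ^ n) *ᵥ v - (B ^ n) *ᵥ v) ≤ ∑ k ∈ range n, nrm ((A - B) *ᵥ ((B ^ k) *ᵥ v)) := by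
  induction n with
  | zero => simp [nrm, nsq]
  | succ n ih =>
    have hsplit : (A ^ (n + 1)) *ᵥ v - (B ^ (n + 1)) *ᵥ v =
        A *ᵥ ((A ^ n) *ᵥ v - (B ^ n) *ᵥ v) + (A - B) *ᵥ ((B ^ n) *ᵥ v) := by
      rw [pow_succ', pow_succ', ← mulVec_mulVec, ← mulVec_mulVec, mulVec_sub, sub_mulVec]
      abel
    rw [hsplit, sum_range_succ]
    exact (nrm_add_le _ _).trans (by rw [hA]; linarith)

end Norms

lemma xorV_xorV_cancel_right {m : ℕ} (a b : Fin m → Bool) : xorV (xorV a b) b = a := by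
  funext i; simp [xorV]

section Oracle

variable {l m : ℕ} {W : Type*}

def oracleFlip (H : (Fin l → Bool) → (Fin m → Bool)) :
    Equiv.Perm ((Fin m → Bool) × (Fin l → Bool) × (Fin m → Bool) × W) :=
  Function.Involutive.toPerm (fun s => (s.1, s.2.1, xorV s.2.2.1 (H s.2.1), s.2.2.2))
    fun s => by simp [xorV_xorV_cancel_right]

@[simp]
lemma oracleFlip_apply (H : (Fin l → Bool) → (Fin m → Bool))
    (s : (Fin m → Bool) × (Fin l → Bool) × (Fin m → Bool) × W) :
    oracleFlip H s = (s.1, s.2.1, xorV s.2.2.1 (H s.2.1), s.2.2.2) := rfl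

variable [Fintype W]

lemma nsq_tensVec (z : Fin m → Bool) (φ : (Fin l → Bool) × (Fin m → Bool) × W → ℂ) :
    nsq (tensVec z φ) = nsq φ := by
  rw [nsq, nsq, Fintype.sum_prod_type]
  simp [tensVec, apply_ite]

variable [DecidableEq W]

lemma o2hOracle_mulVec_apply (H : (Fin l → Bool) → (Fin m → Bool))
    (v : (Fin m → Bool) × (Fin l → Bool) × (Fin m → Bool) × W → ℂ) (s) :
    (o2hOracle H *ᵥ v) s = v (oracleFlip H s) := by
  rw [mulVec, dotProduct, Finset.sum_eq_single (oracleFlip H s)]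
  · simp [o2hOracle, xorV_xorV_cancel_right]
  · intro t _ hts
    rw [o2hOracle, of_apply, if_neg, zero_mul]
    rintro ⟨h1, h2, h3, h4⟩
    refine hts (Prod.ext h1.symm (Prod.ext h2.symm (Prod.ext ?_ h4.symm)))
    simp [h3, h2, xorV_xorV_cancel_right]
  · simp

lemma nrm_o2hOracle_mulVec (H : (Fin l → Bool) → (Fin m → Bool))
    (v : (Fin m → Bool) × (Fin l → Bool) × (Fin m → Bool) × W → ℂ) :
    nrm (o2hOracle H *ᵥ v) = nrm v := by
  simp only [nrm, nsq, o2hOracle_mulVec_apply]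
  rw [Equiv.sum_comp (oracleFlip H) fun s => ‖v s‖ ^ 2]

lemma pquery_mulVec_apply (x : Fin l → Bool)
    (v : (Fin m → Bool) × (Fin l → Bool) × (Fin m → Bool) × W → ℂ) (s) :
    (pquery x *ᵥ v) s = if s.2.1 = x then v s else 0 := by
  simp [pquery, mulVec_diagonal]

lemma o2hOracle_update_sub_mulVec_pquery (H : (Fin l → Bool) → (Fin m → Bool))
    (x : Fin l → Bool) (z : Fin m → Bool)
    (v : (Fin m → Bool) × (Fin l → Bool) × (Fin m → Bool) × W → ℂ) :
    (o2hOracle (Function.update H x z) - o2hOracle H) *ᵥ v =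
      (o2hOracle (Function.update H x z) - o2hOracle H) *ᵥ (pquery x *ᵥ v) := by
  funext s
  simp only [sub_mulVec, Pi.sub_apply, o2hOracle_mulVec_apply, pquery_mulVec_apply,
    oracleFlip_apply]
  by_cases hs : s.2.1 = x <;> simp [hs]

lemma nrm_o2hOracle_update_sub_mulVec_le (H : (Fin l → Bool) → (Fin m → Bool))
    (x : Fin l → Bool) (z : Fin m → Bool)
    (v : (Fin m → Bool) × (Fin l → Bool) × (Fin m → Bool) × W → ℂ) :
    nrm ((o2hOracle (Function.update H x z) - o2hOracle H) *ᵥ v) ≤ 2 * nrm (pquery x *ᵥ v) := by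
  rw [o2hOracle_update_sub_mulVec_pquery, sub_mulVec]
  refine (nrm_sub_le _ _).trans_eq ?_
  rw [nrm_o2hOracle_mulVec, nrm_o2hOracle_mulVec, two_mul]

theorem nsq_proj_reprogrammed_add_nsq_le
    {U : Matrix ((Fin m → Bool) × (Fin l → Bool) × (Fin m → Bool) × W)
      ((Fin m → Bool) × (Fin l → Bool) × (Fin m → Bool) × W) ℂ} (hU : Uᴴ * U = 1)
    {P0 : Matrix ((Fin m → Bool) × (Fin l → Bool) × (Fin m → Bool) × W)
      ((Fin m → Bool) × (Fin l → Bool) × (Fin m → Bool) × W) ℂ}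
    (hidem : P0 * P0 = P0) (hherm : P0ᴴ = P0) (q : ℕ)
    (H : (Fin l → Bool) → (Fin m → Bool)) (x : Fin l → Bool) (z : Fin m → Bool)
    {φ : (Fin m → Bool) × (Fin l → Bool) × (Fin m → Bool) × W → ℂ} (hφ : nsq φ = 1) :
    nsq ((P0 * (U * o2hOracle (Function.update H x z)) ^ q) *ᵥ φ) +
        nsq (((1 - P0) * (U * o2hOracle H) ^ q) *ᵥ φ) ≤
      1 + 4 * ∑ k ∈ range q, nrm (pquery x *ᵥ ((U * o2hOracle H) ^ k *ᵥ φ)) := by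
  have hstep : ∀ (G : (Fin l → Bool) → (Fin m → Bool)) w,
      nrm ((U * o2hOracle G) *ᵥ w) = nrm w := fun G w => by
    rw [← mulVec_mulVec, nrm_mulVec_of_conjTranspose_mul_self hU, nrm_o2hOracle_mulVec]
  have hunit : ∀ (G : (Fin l → Bool) → (Fin m → Bool)), nsq ((U * o2hOracle G) ^ q *ᵥ φ) = 1 :=
    fun G => by rw [← nrm_sq, nrm_pow_mulVec_of_isometry (hstep G), nrm_sq, hφ]
  rw [← mulVec_mulVec, ← mulVec_mulVec]
  refine (nsq_mulVec_add_nsq_one_sub_mulVec_le hidem hherm (hunit _) (hunit _)).trans ?_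
  have hhybrid := nrm_pow_mulVec_sub_pow_mulVec_le (hstep (Function.update H x z))
    (U * o2hOracle H) φ q
  have hdiff : ∀ k ∈ range q,
      nrm ((U * o2hOracle (Function.update H x z) - U * o2hOracle H) *ᵥ
          ((U * o2hOracle H) ^ k *ᵥ φ)) ≤
        2 * nrm (pquery x *ᵥ ((U * o2hOracle H) ^ k *ᵥ φ)) := fun k _ => by
    rw [← Matrix.mul_sub, ← mulVec_mulVec, nrm_mulVec_of_conjTranspose_mul_self hU]
    exact nrm_o2hOracle_update_sub_mulVec_le H x z _
  have := hhybrid.trans (sum_le_sum hdiff)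
  rw [← mul_sum] at this
  linarith

end Oracle

lemma sum_range_eq_mul_inv_mul (q : ℕ) (f : ℕ → ℝ) :
    ∑ k ∈ range q, f k = q * ((q : ℝ)⁻¹ * ∑ k ∈ range q, f k) := by
  rcases eq_or_ne q 0 with rfl | hq
  · simp
  · rw [mul_inv_cancel_left₀ (Nat.cast_ne_zero.mpr hq)]

section Averaging

variable {β γ : Type*} [Fintype β] [DecidableEq β] [Fintype γ]

lemma sum_sum_update_eq_card_nsmul {M : Type*} [AddCommMonoid M] (x : β)
    (f : (β → γ) → γ → M) :
    ∑ H : β → γ, ∑ z, f (Function.update H x z) z = Fintype.card γ • ∑ H : β → γ, f H (H x) := by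
  have hswap : Function.Involutive fun Hz : (β → γ) × γ => (Function.update Hz.1 x Hz.2, Hz.1 x) :=
    fun Hz => by simp
  rw [← Fintype.sum_prod_type', ← Equiv.sum_comp hswap.toPerm]
  simp [Fintype.sum_prod_type_right, sum_const]

/-- `𝔼_{H, x ∼ p, z} f H x z` for a uniform oracle `H : β → γ` and a uniform value `z : γ`. -/
noncomputable def oracleAverage (p : β → ℝ) (f : (β → γ) → β → γ → ℝ) : ℝ :=
  (Fintype.card (β → γ) : ℝ)⁻¹ * ∑ H, ∑ x, p x * ((Fintype.card γ : ℝ)⁻¹ * ∑ z, f H x z)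

variable {p : β → ℝ}

lemma oracleAverage_mono (hp : ∀ x, 0 ≤ p x) {f g : (β → γ) → β → γ → ℝ}
    (hfg : ∀ H x z, f H x z ≤ g H x z) : oracleAverage p f ≤ oracleAverage p g := by
  unfold oracleAverage
  gcongr with H _ x _ z
  · exact hp x
  · exact hfg H x z

lemma oracleAverage_nonneg (hp : ∀ x, 0 ≤ p x) {f : (β → γ) → β → γ → ℝ}
    (hf : ∀ H x z, 0 ≤ f H x z) : 0 ≤ oracleAverage p f := by
  simpa [oracleAverage] using oracleAverage_mono hp (f := 0) hf

lemma oracleAverage_add (f g : (β → γ) → β → γ → ℝ) :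
    oracleAverage p (f + g) = oracleAverage p f + oracleAverage p g := by
  simp only [oracleAverage, Pi.add_apply, sum_add_distrib, mul_add]

lemma oracleAverage_const_add_mul [Nonempty γ] (hpsum : ∑ x, p x = 1)
    (f : (β → γ) → β → γ → ℝ) (a b : ℝ) :
    oracleAverage p (fun H x z => a + b * f H x z) = a + b * oracleAverage p f := by
  have hc : (Fintype.card γ : ℝ) ≠ 0 := by positivity
  have hn : (Fintype.card (β → γ) : ℝ) ≠ 0 := by positivity
  have hH : ∀ H, ∑ x, p x * ((Fintype.card γ : ℝ)⁻¹ * ∑ z, (a + b * f H x z)) =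
      a + b * ∑ x, p x * ((Fintype.card γ : ℝ)⁻¹ * ∑ z, f H x z) := fun H => by
    calc _ = ∑ x, (a * p x + b * (p x * ((Fintype.card γ : ℝ)⁻¹ * ∑ z, f H x z))) :=
          sum_congr rfl fun x _ => by
            rw [sum_add_distrib, sum_const, card_univ, nsmul_eq_mul, ← mul_sum]
            field_simp
      _ = _ := by rw [sum_add_distrib, ← mul_sum, ← mul_sum, hpsum, mul_one]
  rw [oracleAverage, oracleAverage, sum_congr rfl fun H _ => hH H, sum_add_distrib, sum_const,
    card_univ, nsmul_eq_mul, ← mul_sum, mul_add, inv_mul_cancel_left₀ hn]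
  ring

/-- A uniform oracle reprogrammed at `x` to a uniform value `z` is again uniform, with value
`z` at `x`. -/
lemma oracleAverage_update [Nonempty γ] (p : β → ℝ)
    (F : (β → γ) → β → γ → ℝ) :
    oracleAverage p (fun H x z => F (Function.update H x z) x z) =
      (Fintype.card (β → γ) : ℝ)⁻¹ * ∑ H, ∑ x, p x * F H x (H x) := by
  have hx : ∀ x, ∑ H : β → γ, p x * ((Fintype.card γ : ℝ)⁻¹ *
      ∑ z, F (Function.update H x z) x z) = ∑ H, p x * F H x (H x) := fun x => by
    rw [← mul_sum, ← mul_sum, ← mul_sum, sum_sum_update_eq_card_nsmul x fun H z => F H x z,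
      nsmul_eq_mul, inv_mul_cancel_left₀ (by positivity)]
  rw [oracleAverage, sum_comm, sum_congr rfl fun x _ => hx x, sum_comm]

theorem half_oracleAverage_add_half_le [Nonempty γ] (hp : ∀ x, 0 ≤ p x)
    (hpsum : ∑ x, p x = 1) {F G N₁ N₂ : (β → γ) → β → γ → ℝ}
    (hN₁ : ∀ H x z, 0 ≤ N₁ H x z) (hN₂ : ∀ H x z, 0 ≤ N₂ H x z) {r C : ℝ} (hr : 0 ≤ r)
    (hC : 4 * r ≤ C)
    (hFG : ∀ H x z, F H x z + G H x z ≤ 1 + 4 * r * N₂ H x z) :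
    1 / 2 * oracleAverage p F + 1 / 2 * oracleAverage p G ≤
      1 / 2 + C * (1 / 2 * oracleAverage p N₁ + 1 / 2 * oracleAverage p N₂) := by
  have hsum := oracleAverage_mono hp (f := F + G) hFG
  rw [oracleAverage_add, oracleAverage_const_add_mul hpsum] at hsum
  have h₁ := oracleAverage_nonneg hp hN₁
  have h₂ := oracleAverage_nonneg hp hN₂
  nlinarith [mul_le_mul_of_nonneg_right hC h₂, mul_nonneg (by linarith : 0 ≤ C) h₁]

end Averaging

theorem one_way_to_hiding_general (l m q : ℕ)
    (W : Type*) [Fintype W] [DecidableEq W]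
    (U : Matrix ((Fin m → Bool) × (Fin l → Bool) × (Fin m → Bool) × W)
      ((Fin m → Bool) × (Fin l → Bool) × (Fin m → Bool) × W) ℂ)
    (hU₂ : Uᴴ * U = 1)
    (P0 : Matrix ((Fin m → Bool) × (Fin l → Bool) × (Fin m → Bool) × W)
      ((Fin m → Bool) × (Fin l → Bool) × (Fin m → Bool) × W) ℂ)
    (hidem : P0 * P0 = P0) (hherm : P0ᴴ = P0)
    (p : (Fin l → Bool) → ℝ) (hp : ∀ x, 0 ≤ p x) (hpsum : ∑ x, p x = 1)
    (ψ : (Fin l → Bool) → ((Fin l → Bool) × (Fin m → Bool) × W) → ℂ)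
    (hψ : ∀ x, nsq (ψ x) = 1) :
    (1 / 2) * ((Fintype.card ((Fin l → Bool) → (Fin m → Bool)) : ℝ)⁻¹ *
        ∑ H : (Fin l → Bool) → (Fin m → Bool), ∑ x : Fin l → Bool,
          p x * nsq ((P0 * (U * o2hOracle H) ^ q).mulVec (tensVec (H x) (ψ x)))) +
      (1 / 2) * ((Fintype.card ((Fin l → Bool) → (Fin m → Bool)) : ℝ)⁻¹ *
        ∑ H : (Fin l → Bool) → (Fin m → Bool), ∑ x : Fin l → Bool,
          p x * (((2 : ℝ) ^ m)⁻¹ * ∑ z : Fin m → Bool,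
            nsq (((1 - P0) * (U * o2hOracle H) ^ q).mulVec (tensVec z (ψ x))))) ≤
      1 / 2 + ((3 * q + 2) * q : ℝ) *
        ((1 / 2) * ((Fintype.card ((Fin l → Bool) → (Fin m → Bool)) : ℝ)⁻¹ *
            ∑ H : (Fin l → Bool) → (Fin m → Bool), ∑ x : Fin l → Bool,
              p x * (((2 : ℝ) ^ m)⁻¹ * ∑ z : Fin m → Bool,
                (q : ℝ)⁻¹ * ∑ k ∈ Finset.range q,
                  nrm ((pquery x).mulVec
                    (((U * o2hOracle (Function.update H x z)) ^ k).mulVec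
                      (tensVec z (ψ x)))))) +
          (1 / 2) * ((Fintype.card ((Fin l → Bool) → (Fin m → Bool)) : ℝ)⁻¹ *
            ∑ H : (Fin l → Bool) → (Fin m → Bool), ∑ x : Fin l → Bool,
              p x * (((2 : ℝ) ^ m)⁻¹ * ∑ z : Fin m → Bool,
                (q : ℝ)⁻¹ * ∑ k ∈ Finset.range q,
                  nrm ((pquery x).mulVec
                    (((U * o2hOracle H) ^ k).mulVec (tensVec z (ψ x))))))) := by
  have hcard : (2 : ℝ) ^ m = Fintype.card (Fin m → Bool) := by simp
  have hC : (4 * q : ℝ) ≤ (3 * q + 2) * q := by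
    exact_mod_cast (by nlinarith [Nat.le_mul_self q] : 4 * q ≤ (3 * q + 2) * q)
  rw [hcard, ← oracleAverage_update p
    fun H x z => nsq ((P0 * (U * o2hOracle H) ^ q) *ᵥ tensVec z (ψ x))]
  simp only [← oracleAverage.eq_1]
  have hnonneg : ∀ (G : (Fin l → Bool) → (Fin m → Bool)) x z,
      0 ≤ (q : ℝ)⁻¹ * ∑ k ∈ range q, nrm (pquery x *ᵥ ((U * o2hOracle G) ^ k *ᵥ tensVec z (ψ x))) :=
    fun _ _ _ => mul_nonneg (by positivity) (sum_nonneg fun _ _ => nrm_nonneg _)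
  refine half_oracleAverage_add_half_le hp hpsum (fun _ x z => hnonneg _ x z) hnonneg
    q.cast_nonneg hC fun H x z => ?_
  rw [mul_assoc, ← sum_range_eq_mul_inv_mul]
  exact nsq_proj_reprogrammed_add_nsq_le hU₂ hidem hherm q H x z (by rw [nsq_tensVec, hψ])

/-- The one-way-to-hiding lemma (Lemma 7 of the paper): the distinguishing
advantage of a `q`-query algorithm between `H(x)` and a uniformly random string
is bounded by the probability that it queries the oracle at `x`. -/
theorem one_way_to_hiding (l m q : ℕ) (hq : 1 ≤ q)
    (W : Type*) [Fintype W] [DecidableEq W]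
    (U : Matrix ((Fin m → Bool) × (Fin l → Bool) × (Fin m → Bool) × W)
      ((Fin m → Bool) × (Fin l → Bool) × (Fin m → Bool) × W) ℂ)
    (hU₁ : U * Uᴴ = 1) (hU₂ : Uᴴ * U = 1)
    (P0 : Matrix ((Fin m → Bool) × (Fin l → Bool) × (Fin m → Bool) × W)
      ((Fin m → Bool) × (Fin l → Bool) × (Fin m → Bool) × W) ℂ)
    (hidem : P0 * P0 = P0) (hherm : P0ᴴ = P0)
    (p : (Fin l → Bool) → ℝ) (hp : ∀ x, 0 ≤ p x) (hpsum : ∑ x, p x = 1)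
    (ψ : (Fin l → Bool) → ((Fin l → Bool) × (Fin m → Bool) × W) → ℂ)
    (hψ : ∀ x, nsq (ψ x) = 1) :
    (1 / 2) * ((Fintype.card ((Fin l → Bool) → (Fin m → Bool)) : ℝ)⁻¹ *
        ∑ H : (Fin l → Bool) → (Fin m → Bool), ∑ x : Fin l → Bool,
          p x * nsq ((P0 * (U * o2hOracle H) ^ q).mulVec (tensVec (H x) (ψ x)))) +
      (1 / 2) * ((Fintype.card ((Fin l → Bool) → (Fin m → Bool)) : ℝ)⁻¹ *
        ∑ H : (Fin l → Bool) → (Fin m → Bool), ∑ x : Fin l → Bool,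
          p x * (((2 : ℝ) ^ m)⁻¹ * ∑ z : Fin m → Bool,
            nsq (((1 - P0) * (U * o2hOracle H) ^ q).mulVec (tensVec z (ψ x))))) ≤
      1 / 2 + ((3 * q + 2) * q : ℝ) *
        ((1 / 2) * ((Fintype.card ((Fin l → Bool) → (Fin m → Bool)) : ℝ)⁻¹ *
            ∑ H : (Fin l → Bool) → (Fin m → Bool), ∑ x : Fin l → Bool,
              p x * (((2 : ℝ) ^ m)⁻¹ * ∑ z : Fin m → Bool,
                (q : ℝ)⁻¹ * ∑ k ∈ Finset.range q,
                  nrm ((pquery x).mulVec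
                    (((U * o2hOracle (Function.update H x z)) ^ k).mulVec
                      (tensVec z (ψ x)))))) +
          (1 / 2) * ((Fintype.card ((Fin l → Bool) → (Fin m → Bool)) : ℝ)⁻¹ *
            ∑ H : (Fin l → Bool) → (Fin m → Bool), ∑ x : Fin l → Bool,
              p x * (((2 : ℝ) ^ m)⁻¹ * ∑ z : Fin m → Bool,
                (q : ℝ)⁻¹ * ∑ k ∈ Finset.range q,
                  nrm ((pquery x).mulVec
                    (((U * o2hOracle H) ^ k).mulVec (tensVec z (ψ x))))))) :=
  one_way_to_hiding_general l m q W U hU₂ P0 hidem hherm p hp hpsum ψ hψ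
end

section
/- Let H be a complex inner product space, let ψ ∈ H with ‖ψ‖ = 1, let ε ≥ 0, let r ∈ ℕ, and let Π_1, …, Π_r be orthogonal projections on H such that ‖Π_i ψ‖² ≥ 1 − ε for every i ∈ {1, …, r}. Then ‖Π_r Π_{r−1} ⋯ Π_1 ψ‖² ≥ 1 − 2r√ε. -/
/-!
Each `Π_i` is nonexpansive and moves `ψ` by `‖ψ - Π_i ψ‖ = √(1 - ‖Π_i ψ‖²) ≤ √ε` (Pythagoras).
Telescoping through the nonexpansive partial products gives `‖ψ - Π_r ⋯ Π_1 ψ‖ ≤ r√ε`, hence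
`‖Π_r ⋯ Π_1 ψ‖ ≥ 1 - r√ε`, and squaring yields `1 - 2r√ε`.
-/

section Nonexpansive

variable {X ι : Type*} [PseudoMetricSpace X] {f : ι → X → X}

theorem lipschitzWith_one_foldl (hf : ∀ i, LipschitzWith 1 (f i)) :
    ∀ l : List ι, LipschitzWith 1 fun x => l.foldl (fun v i => f i v) x
  | [] => LipschitzWith.id
  | i :: l => by
    simpa [Function.comp_def] using (lipschitzWith_one_foldl hf l).comp (hf i)

theorem dist_foldl_le (hf : ∀ i, LipschitzWith 1 (f i)) {x : X} {δ : ℝ}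
    (hδ : ∀ i, dist (f i x) x ≤ δ) :
    ∀ l : List ι, dist (l.foldl (fun v i => f i v) x) x ≤ l.length * δ
  | [] => by simp
  | i :: l => by
    have hstep : dist (l.foldl (fun v i => f i v) (f i x)) (l.foldl (fun v i => f i v) x)
        ≤ dist (f i x) x := by
      simpa using (lipschitzWith_one_foldl hf l).dist_le_mul (f i x) x
    calc dist ((i :: l).foldl (fun v i => f i v) x) x
        ≤ dist (l.foldl (fun v i => f i v) (f i x)) (l.foldl (fun v i => f i v) x)
          + dist (l.foldl (fun v i => f i v) x) x := dist_triangle _ _ _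
      _ ≤ δ + l.length * δ := add_le_add (hstep.trans (hδ i)) (dist_foldl_le hf hδ l)
      _ = (i :: l).length * δ := by push_cast [List.length_cons]; ring

end Nonexpansive

namespace LinearMap.IsSymmetricProjection

variable {𝕜 E : Type*} [RCLike 𝕜] [NormedAddCommGroup E] [InnerProductSpace 𝕜 E]
  {p : E →ₗ[𝕜] E}

theorem norm_apply_le (hp : p.IsSymmetricProjection) (x : E) : ‖p x‖ ≤ ‖x‖ := by
  obtain ⟨K, _, rfl⟩ := isSymmetricProjection_iff_eq_coe_starProjection.mp hp
  exact K.norm_starProjection_apply_le x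

theorem lipschitzWith_one (hp : p.IsSymmetricProjection) : LipschitzWith 1 p :=
  LipschitzWith.of_dist_le_mul fun x y => by
    simpa [dist_eq_norm, ← map_sub] using hp.norm_apply_le (x - y)

theorem norm_sub_apply_sq (hp : p.IsSymmetricProjection) (x : E) :
    ‖x - p x‖ ^ 2 = ‖x‖ ^ 2 - ‖p x‖ ^ 2 := by
  obtain ⟨K, _, rfl⟩ := isSymmetricProjection_iff_eq_coe_starProjection.mp hp
  rw [K.norm_sq_eq_add_norm_sq_starProjection x, K.starProjection_orthogonal_val]
  simp

end LinearMap.IsSymmetricProjection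

theorem one_sub_two_mul_le_sq {a s : ℝ} (ha : 0 ≤ a) (h : 1 - s ≤ a) : 1 - 2 * s ≤ a ^ 2 := by
  rcases le_total 0 (1 - s) with hs | hs
  · nlinarith [mul_le_mul h h hs ha, sq_nonneg s]
  · nlinarith [sq_nonneg a]

theorem iterated_gentle_measurement_general
    {H : Type*} [NormedAddCommGroup H] [InnerProductSpace ℂ H]
    (ψ : H) (hψ : ‖ψ‖ = 1) (ε : ℝ) (r : ℕ)
    (P : Fin r → (H →ₗ[ℂ] H))
    (hidem : ∀ i, (P i) ∘ₗ (P i) = P i)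
    (hsym : ∀ i, LinearMap.IsSymmetric (P i))
    (hnorm : ∀ i, 1 - ε ≤ ‖P i ψ‖ ^ 2) :
    1 - 2 * r * Real.sqrt ε ≤
      ‖(List.finRange r).foldl (fun v i => P i v) ψ‖ ^ 2 := by
  have hP : ∀ i, (P i).IsSymmetricProjection := fun i => ⟨hidem i, hsym i⟩
  have hmove : ∀ i, dist (P i ψ) ψ ≤ Real.sqrt ε := fun i => by
    rw [dist_comm, dist_eq_norm, ← Real.sqrt_sq (norm_nonneg _)]
    refine Real.sqrt_le_sqrt ?_
    rw [(hP i).norm_sub_apply_sq, hψ]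
    linarith [hnorm i]
  have hclose := dist_foldl_le (fun i => (hP i).lipschitzWith_one) hmove (List.finRange r)
  rw [List.length_finRange] at hclose
  set φ := (List.finRange r).foldl (fun v i => P i v) ψ
  have hφ : 1 - r * Real.sqrt ε ≤ ‖φ‖ := by
    linarith [dist_eq_norm φ ψ, norm_sub_norm_le ψ φ, norm_sub_rev ψ φ]
  simpa only [mul_assoc] using one_sub_two_mul_le_sq (norm_nonneg φ) hφ

/-- Iterated gentle measurement (Lemma 9 of the paper): if each orthogonal
projection `P i` keeps the unit vector `ψ` with probability at least `1 - ε`,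
then applying all of them in sequence keeps `ψ` with probability at least
`1 - 2r√ε`.  The sequential application `Π_r ⋯ Π_1 ψ` is expressed as a left
fold applying `P 0` first. -/
theorem iterated_gentle_measurement
    {H : Type*} [NormedAddCommGroup H] [InnerProductSpace ℂ H]
    (ψ : H) (hψ : ‖ψ‖ = 1) (ε : ℝ) (hε : 0 ≤ ε) (r : ℕ)
    (P : Fin r → (H →ₗ[ℂ] H))
    (hidem : ∀ i, (P i) ∘ₗ (P i) = P i)
    (hsym : ∀ i, LinearMap.IsSymmetric (P i))
    (hnorm : ∀ i, 1 - ε ≤ ‖P i ψ‖ ^ 2) :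
    1 - 2 * r * Real.sqrt ε ≤
      ‖(List.finRange r).foldl (fun v i => P i v) ψ‖ ^ 2 :=
  iterated_gentle_measurement_general ψ hψ ε r P hidem hsym hnorm
end

section
/- Let H be a complex inner product space, let ψ ∈ H with ‖ψ‖ = 1, let ε ≥ 0, let r ∈ ℕ, and let Π_1, …, Π_r be orthogonal projections on H such that ‖Π_i ψ‖² ≥ 1 − ε for every i. Then for every ℓ with 0 ≤ ℓ ≤ r there exists a vector η with Π_ℓ Π_{ℓ−1} ⋯ Π_1 ψ = ψ + η and ‖η‖ ≤ ℓ·√ε. -/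
/-! Each projection moves `ψ` by `‖ψ - Π ψ‖ = √(‖ψ‖² - ‖Π ψ‖²) ≤ √ε` and, being a contraction,
does not increase the distance already accumulated; so after `ℓ` projections the errors add up
to at most `ℓ√ε`. -/

theorem dist_foldl_le_of_lipschitzWith_one {X ι : Type*} [PseudoMetricSpace X]
    (f : ι → X → X) (y : X) (δ : ℝ) (L : List ι)
    (hf : ∀ i ∈ L, LipschitzWith 1 (f i)) (hy : ∀ i ∈ L, dist (f i y) y ≤ δ) (x : X) :
    dist (L.foldl (fun z i => f i z) x) y ≤ dist x y + L.length * δ := by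
  induction L generalizing x with
  | nil => simp
  | cons i L ih =>
    have hstep : dist (f i x) y ≤ dist x y + δ :=
      calc dist (f i x) y ≤ dist (f i x) (f i y) + dist (f i y) y := dist_triangle _ _ _
        _ ≤ dist x y + δ := by
          gcongr
          · simpa using (hf i List.mem_cons_self).dist_le_mul x y
          · exact hy i List.mem_cons_self
    have hrest := ih (fun j hj => hf j (List.mem_cons_of_mem i hj))
      (fun j hj => hy j (List.mem_cons_of_mem i hj)) (f i x)
    simp only [List.foldl_cons, List.length_cons, Nat.cast_succ] at hrest ⊢
    linarith

namespace LinearMap.IsSymmetricProjection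

variable {𝕜 E : Type*} [RCLike 𝕜] [NormedAddCommGroup E] [InnerProductSpace 𝕜 E]
  {T : E →ₗ[𝕜] E}

theorem norm_sq_eq_norm_apply_sq_add_norm_sub_apply_sq (hT : T.IsSymmetricProjection) (x : E) :
    ‖x‖ ^ 2 = ‖T x‖ ^ 2 + ‖x - T x‖ ^ 2 := by
  obtain ⟨K, _, rfl⟩ := T.isSymmetricProjection_iff_eq_coe_starProjection.mp hT
  simpa [K.starProjection_orthogonal'] using K.norm_sq_eq_add_norm_sq_starProjection x

theorem lipschitzWith_one_s8 (hT : T.IsSymmetricProjection) : LipschitzWith 1 T := by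
  obtain ⟨K, _, rfl⟩ := T.isSymmetricProjection_iff_eq_coe_starProjection.mp hT
  exact K.lipschitzWith_starProjection

theorem dist_apply_self_le_sqrt (hT : T.IsSymmetricProjection) {x : E} (hx : ‖x‖ = 1) {ε : ℝ}
    (h : 1 - ε ≤ ‖T x‖ ^ 2) : dist (T x) x ≤ √ε := by
  have hpyth := hT.norm_sq_eq_norm_apply_sq_add_norm_sub_apply_sq x
  rw [dist_comm, dist_eq_norm]
  exact Real.le_sqrt_of_sq_le (by rw [hx] at hpyth; linarith)

end LinearMap.IsSymmetricProjection

theorem gentle_measurement_induction_general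
    {H : Type*} [NormedAddCommGroup H] [InnerProductSpace ℂ H]
    (ψ : H) (hψ : ‖ψ‖ = 1) (ε : ℝ) (r : ℕ)
    (P : Fin r → (H →ₗ[ℂ] H))
    (hidem : ∀ i, (P i) ∘ₗ (P i) = P i)
    (hsym : ∀ i, LinearMap.IsSymmetric (P i))
    (hnorm : ∀ i, 1 - ε ≤ ‖P i ψ‖ ^ 2) :
    ∀ ℓ : ℕ, ℓ ≤ r →
      ∃ η : H, ((List.finRange r).take ℓ).foldl (fun v i => P i v) ψ = ψ + η ∧
        ‖η‖ ≤ ℓ * Real.sqrt ε := by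
  intro ℓ hℓ
  have hP (i : Fin r) : (P i).IsSymmetricProjection := ⟨hidem i, hsym i⟩
  refine ⟨((List.finRange r).take ℓ).foldl (fun v i => P i v) ψ - ψ, by abel, ?_⟩
  have hdist := dist_foldl_le_of_lipschitzWith_one (fun i => ⇑(P i)) ψ √ε
    ((List.finRange r).take ℓ) (fun i _ => (hP i).lipschitzWith_one_s8)
    (fun i _ => (hP i).dist_apply_self_le_sqrt hψ (hnorm i)) ψ
  simpa [dist_eq_norm, hℓ] using hdist

/-- The inductive claim in the proof of Lemma 9 of the paper: if each orthogonal
projection `P i` keeps the unit vector `ψ` with probability at least `1 - ε`,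
then for every `ℓ ≤ r` the sequential application of the first `ℓ` projections
(`P 0` applied first) differs from `ψ` by a vector of norm at most `ℓ√ε`. -/
theorem gentle_measurement_induction
    {H : Type*} [NormedAddCommGroup H] [InnerProductSpace ℂ H]
    (ψ : H) (hψ : ‖ψ‖ = 1) (ε : ℝ) (hε : 0 ≤ ε) (r : ℕ)
    (P : Fin r → (H →ₗ[ℂ] H))
    (hidem : ∀ i, (P i) ∘ₗ (P i) = P i)
    (hsym : ∀ i, LinearMap.IsSymmetric (P i))
    (hnorm : ∀ i, 1 - ε ≤ ‖P i ψ‖ ^ 2) :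
    ∀ ℓ : ℕ, ℓ ≤ r →
      ∃ η : H, ((List.finRange r).take ℓ).foldl (fun v i => P i v) ψ = ψ + η ∧
        ‖η‖ ≤ ℓ * Real.sqrt ε :=
  gentle_measurement_induction_general ψ hψ ε r P hidem hsym hnorm
end

section
/- Let m ∈ ℕ and θ, a, b : Fin m → Bool. If for every index i either (θ_i = false and a_i = false) or (θ_i = true and b_i = false), then Π_θ^eq |φ⁺_{ab}⟩ = |φ⁺_{ab}⟩; otherwise Π_θ^eq |φ⁺_{ab}⟩ = 0. -/
open Matrix Kronecker

/-- Single-qubit entry of the tensor-product Hadamard unitary `H^θ`: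
`c = (1/√2)·(−1)^{u·v}` when the basis bit is `true` (Hadamard basis) and
`c = δ_{u,v}` when it is `false` (computational basis). -/
noncomputable def hadEntry (t u v : Bool) : ℂ :=
  if t then (((Real.sqrt 2)⁻¹ : ℝ) : ℂ) * (if u && v then -1 else 1)
  else if u = v then 1 else 0

/-- The tensor-product Hadamard unitary `H^θ` on `m` qubits. -/
noncomputable def hadTheta {m : ℕ} (θ : Fin m → Bool) :
    Matrix (Fin m → Bool) (Fin m → Bool) ℂ :=
  Matrix.of fun u v => ∏ i, hadEntry (θ i) (u i) (v i)

/-- The `m`-qubit EPR state `|φ⁺⟩ = 2^{-m/2} ∑_v |v⟩ ⊗ |v⟩`. -/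
noncomputable def epr (m : ℕ) : (Fin m → Bool) × (Fin m → Bool) → ℂ :=
  fun p => if p.1 = p.2 then (((Real.sqrt (2 ^ m))⁻¹ : ℝ) : ℂ) else 0

/-- The inner product `b·v = ∑ i, b_i·v_i` (as a natural number). -/
def dotB {m : ℕ} (b v : Fin m → Bool) : ℕ := ∑ i, (if b i && v i then 1 else 0)

/-- The Pauli operator `X^a Z^b`, with `X^a Z^b |v⟩ = (−1)^{b·v} |v ⊕ a⟩`. -/
noncomputable def XZ {m : ℕ} (a b : Fin m → Bool) :
    Matrix (Fin m → Bool) (Fin m → Bool) ℂ :=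
  Matrix.of fun u v => if u = xorV v a then (-1 : ℂ) ^ dotB b v else 0

/-- The damaged EPR state `|φ⁺_{ab}⟩ = (1 ⊗ X^a Z^b)|φ⁺⟩`. -/
noncomputable def phiAB {m : ℕ} (a b : Fin m → Bool) :
    (Fin m → Bool) × (Fin m → Bool) → ℂ :=
  ((1 : Matrix (Fin m → Bool) (Fin m → Bool) ℂ) ⊗ₖ XZ a b).mulVec (epr m)

/-- The projector `Π_θ^eq = ∑_v (H^θ|v⟩⟨v|H^θ) ⊗ (H^θ|v⟩⟨v|H^θ)` onto states of two
`m`-qubit registers yielding equal outcomes when both are measured in the `H^θ` basis. -/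
noncomputable def PiEq {m : ℕ} (θ : Fin m → Bool) :
    Matrix ((Fin m → Bool) × (Fin m → Bool)) ((Fin m → Bool) × (Fin m → Bool)) ℂ :=
  ∑ v : Fin m → Bool,
    (hadTheta θ * Matrix.single v v 1 * hadTheta θ) ⊗ₖ
      (hadTheta θ * Matrix.single v v 1 * hadTheta θ)

/-- Hamming weight of a Boolean string. -/
def hw {m : ℕ} (a : Fin m → Bool) : ℕ := ∑ i, (if a i then 1 else 0)

/-- `Π_t^EPR = ∑_{a,b : w(a) ≤ t, w(b) ≤ t} |φ⁺_{ab}⟩⟨φ⁺_{ab}|`, the projector onto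
the span of EPR pairs with at most `t` Pauli errors of each type. -/
noncomputable def PiEPR (m t : ℕ) :
    Matrix ((Fin m → Bool) × (Fin m → Bool)) ((Fin m → Bool) × (Fin m → Bool)) ℂ :=
  ∑ a : Fin m → Bool, ∑ b : Fin m → Bool,
    if hw a ≤ t ∧ hw b ≤ t then Matrix.vecMulVec (phiAB a b) (star (phiAB a b)) else 0

/-!
Both `Π_θ^eq` and `|φ⁺_{ab}⟩` are tensor products over the `m` qubits, so every amplitude of
`Π_θ^eq |φ⁺_{ab}⟩` is a product of single-qubit amplitudes. On one qubit, measuring both halves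
of `(1 ⊗ X^α Z^β)|φ⁺⟩` in the basis `t` gives equal outcomes with certainty when the error is
invisible in that basis (`t = 0, α = 0` or `t = 1, β = 0`), and never otherwise. So each
single-qubit factor is fixed or annihilated, and `Π_θ^eq` fixes `|φ⁺_{ab}⟩` exactly when every
factor is fixed.
-/

lemma Matrix.mul_single_mul_apply {l n o R : Type*} [Fintype n] [DecidableEq n] [Fintype o]
    [DecidableEq o] [Semiring R] (A : Matrix l n R) (B : Matrix o l R) (k : n) (k' : o) (c : R)
    (i j : l) : (A * single k k' c * B) i j = A i k * c * B k' j := by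
  simp [Matrix.mul_apply, Matrix.single, ite_and]

/-- The unnormalised amplitude of the one-qubit state `(1 ⊗ X^α Z^β)(|00⟩ + |11⟩)` at `|x y⟩`. -/
def qubitPhi (α β x y : Bool) : ℂ :=
  if y = xor x α then (if β && x then -1 else 1) else 0

lemma neg_one_pow_dotB {m : ℕ} (b v : Fin m → Bool) :
    (-1 : ℂ) ^ dotB b v = ∏ i, (if b i && v i then (-1 : ℂ) else 1) := by
  rw [dotB, ← Finset.prod_pow_eq_pow_sum]
  exact Finset.prod_congr rfl fun i _ => by cases b i && v i <;> simp

lemma phiAB_apply {m : ℕ} (a b u w : Fin m → Bool) :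
    phiAB a b (u, w) =
      (((Real.sqrt (2 ^ m))⁻¹ : ℝ) : ℂ) * ∏ i, qubitPhi (a i) (b i) (u i) (w i) := by
  have hXZ : phiAB a b (u, w) = XZ a b w u * (((Real.sqrt (2 ^ m))⁻¹ : ℝ) : ℂ) := by
    simp [phiAB, Matrix.mulVec, dotProduct, Fintype.sum_prod_type, epr, Matrix.one_apply,
      Finset.sum_ite_eq]
  simp only [hXZ, XZ, qubitPhi, Matrix.of_apply, Fintype.prod_ite_zero, ← funext_iff,
    neg_one_pow_dotB]
  exact mul_comm _ _

lemma qubit_piEq_mulVec_qubitPhi (t α β x y : Bool) :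
    ∑ p, ∑ q, ∑ v, hadEntry t x v * hadEntry t v p * (hadEntry t y v * hadEntry t v q) *
        qubitPhi α β p q =
      if (t = false ∧ α = false) ∨ (t = true ∧ β = false) then qubitPhi α β x y else 0 := by
  have h : ((Real.sqrt 2 : ℂ))⁻¹ ^ 4 = 1 / 4 := by
    rw [show (4 : ℕ) = 2 * 2 from rfl, pow_mul, inv_pow, ← Complex.ofReal_pow,
      Real.sq_sqrt zero_le_two]
    norm_num
  cases t <;> cases α <;> cases β <;> cases x <;> cases y <;>
    simp [hadEntry, qubitPhi] <;> ring_nf <;> rw [h] <;> norm_num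

lemma piEq_apply {m : ℕ} (θ u w p q : Fin m → Bool) :
    PiEq θ (u, w) (p, q) =
      ∑ v, hadTheta θ u v * hadTheta θ v p * (hadTheta θ w v * hadTheta θ v q) := by
  simp only [PiEq, Matrix.sum_apply, kronecker_apply, mul_single_mul_apply, mul_one]

lemma piEq_mulVec_phiAB_apply {m : ℕ} (θ a b u w : Fin m → Bool) :
    (PiEq θ *ᵥ phiAB a b) (u, w) =
      (((Real.sqrt (2 ^ m))⁻¹ : ℝ) : ℂ) *
        ∏ i, if (θ i = false ∧ a i = false) ∨ (θ i = true ∧ b i = false) then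
          qubitPhi (a i) (b i) (u i) (w i) else 0 := by
  calc (PiEq θ *ᵥ phiAB a b) (u, w)
      = ∑ p : Fin m → Bool, ∑ q : Fin m → Bool, ∑ v : Fin m → Bool,
          hadTheta θ u v * hadTheta θ v p * (hadTheta θ w v * hadTheta θ v q) *
            phiAB a b (p, q) := by
        simp only [mulVec, dotProduct, Fintype.sum_prod_type, piEq_apply, Finset.sum_mul]
    _ = (((Real.sqrt (2 ^ m))⁻¹ : ℝ) : ℂ) *
          ∑ p : Fin m → Bool, ∑ q : Fin m → Bool, ∑ v : Fin m → Bool, ∏ i,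
            hadEntry (θ i) (u i) (v i) * hadEntry (θ i) (v i) (p i) *
              (hadEntry (θ i) (w i) (v i) * hadEntry (θ i) (v i) (q i)) *
              qubitPhi (a i) (b i) (p i) (q i) := by
        simp only [hadTheta, of_apply, phiAB_apply, Finset.mul_sum, Finset.prod_mul_distrib]
        refine Finset.sum_congr rfl fun p _ => Finset.sum_congr rfl fun q _ =>
          Finset.sum_congr rfl fun v _ => by ring
    _ = _ := by simp only [← qubit_piEq_mulVec_qubitPhi, Fintype.prod_sum]

lemma piEq_mulVec_phiAB {m : ℕ} (θ a b : Fin m → Bool) :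
    PiEq θ *ᵥ phiAB a b =
      if ∀ i, (θ i = false ∧ a i = false) ∨ (θ i = true ∧ b i = false) then phiAB a b
      else 0 := by
  funext ⟨u, w⟩
  rw [piEq_mulVec_phiAB_apply, Fintype.prod_ite_zero, mul_ite, mul_zero]
  split_ifs <;> simp only [phiAB_apply, Pi.zero_apply]

/-- Unruh's EPR equality lemma (Lemma 26 of the paper): if for every index `i`
either (`θ_i = false` and `a_i = false`) or (`θ_i = true` and `b_i = false`), then
`Π_θ^eq |φ⁺_{ab}⟩ = |φ⁺_{ab}⟩`; otherwise `Π_θ^eq |φ⁺_{ab}⟩ = 0`. -/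
theorem unruh_epr_equality (m : ℕ) (θ a b : Fin m → Bool) :
    ((∀ i, (θ i = false ∧ a i = false) ∨ (θ i = true ∧ b i = false)) →
        (PiEq θ).mulVec (phiAB a b) = phiAB a b) ∧
      ((¬ ∀ i, (θ i = false ∧ a i = false) ∨ (θ i = true ∧ b i = false)) →
        (PiEq θ).mulVec (phiAB a b) = 0) := by
  rw [piEq_mulVec_phiAB]
  exact ⟨fun h => if_pos h, fun h => if_neg h⟩
end

section
/- Let m, t ∈ ℕ and a, b : Fin m → Bool with t + 1 ≤ max(w(a), w(b)), where w denotes Hamming weight. Then the number of θ : Fin m → Bool such that for every index i either (θ_i = false and a_i = false) or (θ_i = true and b_i = false) satisfies: (that number) · 2^{t+1} ≤ 2^m. -/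
/-! A good `θ` is forced to be `true` wherever `a` has an error and `false` wherever `b` has
one, and fixing `k` coordinates leaves only `2 ^ (m - k)` strings. -/

open Finset

theorem card_filter_forall_mem_eq_mul_pow {ι β : Type*} [Fintype ι] [DecidableEq ι]
    [Fintype β] [DecidableEq β] (s : Finset ι) (f : ι → β) :
    #{θ : ι → β | ∀ i ∈ s, θ i = f i} * Fintype.card β ^ #s =
      Fintype.card β ^ Fintype.card ι := by
  have hpi : ({θ : ι → β | ∀ i ∈ s, θ i = f i} : Finset _) =
      Fintype.piFinset fun i => if i ∈ s then {f i} else univ := by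
    ext θ
    simp only [mem_filter, mem_univ, true_and, Fintype.mem_piFinset]
    refine forall_congr' fun i => ?_
    split_ifs <;> simp_all
  rw [hpi, Fintype.card_piFinset]
  simp only [apply_ite card, card_singleton, card_univ]
  rw [prod_ite, prod_const_one, one_mul, prod_const, ← pow_add, filter_notMem_eq_sdiff,
    ← compl_eq_univ_sdiff, card_compl_add_card]

theorem hw_eq_card_filter {m : ℕ} (c : Fin m → Bool) : hw c = #{i | c i = true} := by
  rw [hw, card_filter]

theorem card_mul_two_pow_hw_le_of_forall_eq {m : ℕ} {F : Finset (Fin m → Bool)}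
    (c : Fin m → Bool) (v : Bool) (hF : ∀ θ ∈ F, ∀ i, c i = true → θ i = v) :
    #F * 2 ^ hw c ≤ 2 ^ m := by
  let s : Finset (Fin m) := {i | c i = true}
  have hsub : F ⊆ ({θ | ∀ i ∈ s, θ i = v} : Finset (Fin m → Bool)) := fun θ hθ => by
    simpa [s] using hF θ hθ
  calc #F * 2 ^ hw c
      = #F * 2 ^ #s := by rw [hw_eq_card_filter]
    _ ≤ #{θ : Fin m → Bool | ∀ i ∈ s, θ i = v} * 2 ^ #s :=
        Nat.mul_le_mul_right _ (card_le_card hsub)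
    _ = 2 ^ m := by
        convert card_filter_forall_mem_eq_mul_pow s fun _ => v <;> simp

/-- The counting claim from the paper's SSL security proof: for error patterns
`(a, b)` with at least `t + 1` errors, at most a `2^{-(t+1)}` fraction of basis
choices `θ` satisfy the condition of Unruh's EPR equality lemma. -/
theorem good_theta_count (m t : ℕ) (a b : Fin m → Bool)
    (hweight : t + 1 ≤ max (hw a) (hw b)) :
    (Finset.univ.filter fun θ : Fin m → Bool =>
        ∀ i, (θ i = false ∧ a i = false) ∨ (θ i = true ∧ b i = false)).card *
      2 ^ (t + 1) ≤ 2 ^ m := by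
  set G := Finset.univ.filter fun θ : Fin m → Bool =>
    ∀ i, (θ i = false ∧ a i = false) ∨ (θ i = true ∧ b i = false)
  have bound (c : Fin m → Bool) (v : Bool) (hG : ∀ θ ∈ G, ∀ i, c i = true → θ i = v)
      (hc : t + 1 ≤ hw c) : #G * 2 ^ (t + 1) ≤ 2 ^ m :=
    (Nat.mul_le_mul_left _ (Nat.pow_le_pow_right two_pos hc)).trans
      (card_mul_two_pow_hw_le_of_forall_eq c v hG)
  rcases le_max_iff.mp hweight with ha | hb
  · refine bound a true (fun θ hθ i hai => ?_) ha
    rcases (mem_filter.mp hθ).2 i with ⟨-, hai'⟩ | ⟨hθi, -⟩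
    · simp [hai] at hai'
    · exact hθi
  · refine bound b false (fun θ hθ i hbi => ?_) hb
    rcases (mem_filter.mp hθ).2 i with ⟨hθi, -⟩ | ⟨-, hbi'⟩
    · exact hθi
    · simp [hbi] at hbi'
end
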